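/- arXiv:2103.15372 — 4 statements merged into one kernel-verified Lean document; each statement's English description precedes it below -/
import Mathlib

section
/- Let α, β, γ ∈ ℝ satisfy α + β > 0, β > 0 and γ > 0. Then there exists a constant N = N(α, β, γ) > 0 such that for all real numbers a ≥ b > 0, ∫_0^∞ t^{γ/2 − 1} (a + √t)^{−α} (b + √t)^{−(β+γ)} dt ≤ N a^{−α} b^{−β}. -/
/-!
Split `(0, ∞)` at `b²` and `a²`. On each piece, `a + √t` is comparable (up to a factor 2) to
`max a √t` and `b + √t` to `max b √t`, so the integrand is bounded by a constant times a single
power of `t`: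
`t^(γ/2-1) a^(-α) b^(-(β+γ))` on `(0, b²]`, `a^(-α) t^(-β/2-1)` on `(b², a²]` and
`t^(-(α+β)/2-1)` on `(a², ∞)`. The three exponents are integrable there exactly because
`γ > 0`, `β > 0` and `α + β > 0`, and the three integrals are
`(2/γ) a^(-α) b^(-β)`, `(2/β) a^(-α) b^(-β)` and `(2/(α+β)) a^(-(α+β)) ≤ (2/(α+β)) a^(-α) b^(-β)`.
-/

open MeasureTheory Set

namespace Real

lemma rpow_le_two_rpow_abs_mul_rpow {x y : ℝ} (hx : 0 < x) (hxy : x ≤ y) (hyx : y ≤ 2 * x)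
    (s : ℝ) : y ^ s ≤ 2 ^ |s| * x ^ s := by
  have hxs : 0 ≤ x ^ s := rpow_nonneg hx.le s
  rcases le_or_gt 0 s with hs | hs
  · calc y ^ s ≤ (2 * x) ^ s := rpow_le_rpow (by linarith) hyx hs
      _ = 2 ^ s * x ^ s := mul_rpow zero_le_two hx.le
      _ ≤ 2 ^ |s| * x ^ s := by
          gcongr
          · exact one_le_two
          · exact le_abs_self s
  · calc y ^ s ≤ x ^ s := rpow_le_rpow_of_nonpos hx hxy hs.le
      _ ≤ 2 ^ |s| * x ^ s := le_mul_of_one_le_left hxs (one_le_rpow one_le_two (abs_nonneg s))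

lemma add_rpow_le_two_rpow_abs_mul_max_rpow {x y : ℝ} (hx : 0 < x) (hy : 0 ≤ y) (s : ℝ) :
    (x + y) ^ s ≤ 2 ^ |s| * max x y ^ s := by
  refine rpow_le_two_rpow_abs_mul_rpow (lt_max_of_lt_left hx) ?_ ?_ s
  · exact max_le (by linarith) (by linarith)
  · linarith [le_max_left x y, le_max_right x y]

lemma sqrt_rpow {t : ℝ} (ht : 0 ≤ t) (r : ℝ) : √t ^ r = t ^ (r / 2) := by
  rw [sqrt_eq_rpow, ← rpow_mul ht]
  ring_nf

lemma sq_rpow_div_two {x : ℝ} (hx : 0 ≤ x) (r : ℝ) : (x ^ 2) ^ (r / 2) = x ^ r := by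
  rw [← rpow_natCast, ← rpow_mul hx]
  ring_nf

end Real

lemma lintegral_ofReal_le_ofReal_integral {X : Type*} [MeasurableSpace X] {μ : Measure X}
    {f g : X → ℝ} (hfg : ∀ᵐ x ∂μ, f x ≤ g x) (hg0 : 0 ≤ᵐ[μ] g) (hg : Integrable g μ) :
    ∫⁻ x, ENNReal.ofReal (f x) ∂μ ≤ ENNReal.ofReal (∫ x, g x ∂μ) := by
  rw [ofReal_integral_eq_lintegral_ofReal hg hg0]
  exact lintegral_mono_ae (hfg.mono fun x hx => ENNReal.ofReal_le_ofReal hx)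

lemma integral_Ioc_zero_sq_rpow {b γ : ℝ} (hb : 0 < b) (hγ : 0 < γ) :
    ∫ t in Ioc 0 (b ^ 2), t ^ (γ / 2 - 1) = 2 / γ * b ^ γ := by
  rw [← intervalIntegral.integral_of_le (by positivity), integral_rpow (Or.inl (by linarith)),
    Real.zero_rpow (by linarith), sub_add_cancel, Real.sq_rpow_div_two hb.le, sub_zero]
  field_simp

lemma integral_Ioi_sq_rpow {a δ : ℝ} (ha : 0 < a) (hδ : 0 < δ) :
    ∫ t in Ioi (a ^ 2), t ^ (-δ / 2 - 1) = 2 / δ * a ^ (-δ) := by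
  rw [integral_Ioi_rpow_of_lt (by linarith) (by positivity), sub_add_cancel,
    Real.sq_rpow_div_two ha.le]
  field_simp

namespace TwoScaleKernel

variable {α β γ a b : ℝ}

noncomputable def kernel (α β γ a b t : ℝ) : ℝ :=
  t ^ (γ / 2 - 1) * (a + √t) ^ (-α) * (b + √t) ^ (-(β + γ))

/-- The price of replacing `a + √t` by `max a √t` and `b + √t` by `max b √t`. -/
noncomputable def comparisonConst (α β γ : ℝ) : ℝ := 2 ^ |α| * 2 ^ |β + γ|

lemma comparisonConst_pos : 0 < comparisonConst α β γ := by
  unfold comparisonConst; positivity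

lemma kernel_le_max (ha : 0 < a) (hb : 0 < b) {t : ℝ} (ht : 0 ≤ t) :
    kernel α β γ a b t ≤ comparisonConst α β γ *
      (t ^ (γ / 2 - 1) * max a √t ^ (-α) * max b √t ^ (-(β + γ))) := by
  have hA := Real.add_rpow_le_two_rpow_abs_mul_max_rpow ha (Real.sqrt_nonneg t) (-α)
  have hB := Real.add_rpow_le_two_rpow_abs_mul_max_rpow hb (Real.sqrt_nonneg t) (-(β + γ))
  rw [abs_neg] at hA hB
  calc kernel α β γ a b t
      ≤ t ^ (γ / 2 - 1) * (2 ^ |α| * max a √t ^ (-α)) *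
          (2 ^ |β + γ| * max b √t ^ (-(β + γ))) := by
        unfold kernel
        gcongr
    _ = _ := by unfold comparisonConst; ring

lemma setLIntegral_kernel_Ioc_zero_le (hb : 0 < b) (hba : b ≤ a) (hγ : 0 < γ) :
    ∫⁻ t in Ioc 0 (b ^ 2), ENNReal.ofReal (kernel α β γ a b t) ≤
      ENNReal.ofReal (comparisonConst α β γ * (2 / γ) * (a ^ (-α) * b ^ (-β))) := by
  have ha : 0 < a := hb.trans_le hba
  have hpow : IntegrableOn (fun t : ℝ => t ^ (γ / 2 - 1)) (Ioc 0 (b ^ 2)) := by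
    rw [← intervalIntegrable_iff_integrableOn_Ioc_of_le (by positivity)]
    exact intervalIntegral.intervalIntegrable_rpow' (by linarith)
  have hbound : ∀ t ∈ Ioc 0 (b ^ 2), kernel α β γ a b t ≤
      comparisonConst α β γ * a ^ (-α) * b ^ (-(β + γ)) * t ^ (γ / 2 - 1) := by
    rintro t ⟨ht0, htb⟩
    have hsb : √t ≤ b := (Real.sqrt_le_left hb.le).mpr htb
    refine (kernel_le_max ha hb ht0.le).trans_eq ?_
    rw [max_eq_left (hsb.trans hba), max_eq_left hsb]
    ring
  have hC := comparisonConst_pos (α := α) (β := β) (γ := γ)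
  calc ∫⁻ t in Ioc 0 (b ^ 2), ENNReal.ofReal (kernel α β γ a b t)
      ≤ ENNReal.ofReal (∫ t in Ioc 0 (b ^ 2),
          comparisonConst α β γ * a ^ (-α) * b ^ (-(β + γ)) * t ^ (γ / 2 - 1)) := by
        refine lintegral_ofReal_le_ofReal_integral
          (ae_restrict_of_forall_mem measurableSet_Ioc hbound)
          (ae_restrict_of_forall_mem measurableSet_Ioc fun t ht => ?_) (hpow.const_mul _)
        have := ht.1
        positivity
    _ = ENNReal.ofReal (comparisonConst α β γ * (2 / γ) * (a ^ (-α) * b ^ (-β))) := by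
        have hexp : b ^ (-(β + γ)) * b ^ γ = b ^ (-β) := by
          rw [← Real.rpow_add hb]; ring_nf
        rw [integral_const_mul, integral_Ioc_zero_sq_rpow hb hγ, ← hexp]
        ring_nf

lemma setLIntegral_kernel_Ioc_sq_le (hb : 0 < b) (hba : b ≤ a) (hβ : 0 < β) :
    ∫⁻ t in Ioc (b ^ 2) (a ^ 2), ENNReal.ofReal (kernel α β γ a b t) ≤
      ENNReal.ofReal (comparisonConst α β γ * (2 / β) * (a ^ (-α) * b ^ (-β))) := by
  have ha : 0 < a := hb.trans_le hba
  have hbound : ∀ t ∈ Ioc (b ^ 2) (a ^ 2), kernel α β γ a b t ≤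
      comparisonConst α β γ * a ^ (-α) * t ^ (-β / 2 - 1) := by
    rintro t ⟨htb, hta⟩
    have ht0 : 0 < t := (by positivity : (0 : ℝ) < b ^ 2).trans htb
    have hbs : b ≤ √t := Real.le_sqrt_of_sq_le htb.le
    have hsa : √t ≤ a := (Real.sqrt_le_left ha.le).mpr hta
    refine (kernel_le_max ha hb ht0.le).trans_eq ?_
    have hexp : t ^ (γ / 2 - 1) * t ^ (-(β + γ) / 2) = t ^ (-β / 2 - 1) := by
      rw [← Real.rpow_add ht0]; ring_nf
    rw [max_eq_left hsa, max_eq_right hbs, Real.sqrt_rpow ht0.le, ← hexp]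
    ring
  have hC := comparisonConst_pos (α := α) (β := β) (γ := γ)
  have hg : IntegrableOn (fun t => comparisonConst α β γ * a ^ (-α) * t ^ (-β / 2 - 1))
      (Ioi (b ^ 2)) :=
    (integrableOn_Ioi_rpow_of_lt (by linarith) (by positivity)).const_mul _
  have hg0 : ∀ t ∈ Ioi (b ^ 2), 0 ≤ comparisonConst α β γ * a ^ (-α) * t ^ (-β / 2 - 1) := by
    intro t ht
    have : 0 < t := lt_trans (by positivity) ht
    positivity
  calc ∫⁻ t in Ioc (b ^ 2) (a ^ 2), ENNReal.ofReal (kernel α β γ a b t)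
      ≤ ENNReal.ofReal (∫ t in Ioc (b ^ 2) (a ^ 2),
          comparisonConst α β γ * a ^ (-α) * t ^ (-β / 2 - 1)) :=
        lintegral_ofReal_le_ofReal_integral
          (ae_restrict_of_forall_mem measurableSet_Ioc hbound)
          (ae_restrict_of_forall_mem measurableSet_Ioc fun t ht => hg0 t ht.1)
          (hg.mono_set Ioc_subset_Ioi_self)
    _ ≤ ENNReal.ofReal (∫ t in Ioi (b ^ 2),
          comparisonConst α β γ * a ^ (-α) * t ^ (-β / 2 - 1)) := by
        gcongr 1
        exact setIntegral_mono_set hg (ae_restrict_of_forall_mem measurableSet_Ioi hg0)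
          Ioc_subset_Ioi_self.eventuallyLE
    _ = ENNReal.ofReal (comparisonConst α β γ * (2 / β) * (a ^ (-α) * b ^ (-β))) := by
        rw [integral_const_mul, integral_Ioi_sq_rpow hb hβ]
        ring_nf

lemma setLIntegral_kernel_Ioi_sq_le (hb : 0 < b) (hba : b ≤ a) (hβ : 0 ≤ β)
    (hαβ : 0 < α + β) :
    ∫⁻ t in Ioi (a ^ 2), ENNReal.ofReal (kernel α β γ a b t) ≤
      ENNReal.ofReal (comparisonConst α β γ * (2 / (α + β)) * (a ^ (-α) * b ^ (-β))) := by
  have ha : 0 < a := hb.trans_le hba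
  have hpow : IntegrableOn (fun t : ℝ => t ^ (-(α + β) / 2 - 1)) (Ioi (a ^ 2)) :=
    integrableOn_Ioi_rpow_of_lt (by linarith) (by positivity)
  have hbound : ∀ t ∈ Ioi (a ^ 2), kernel α β γ a b t ≤
      comparisonConst α β γ * t ^ (-(α + β) / 2 - 1) := by
    intro t hta
    have ht0 : 0 < t := (by positivity : (0 : ℝ) < a ^ 2).trans hta
    have has : a ≤ √t := Real.le_sqrt_of_sq_le (le_of_lt hta)
    have hexp : t ^ (γ / 2 - 1) * t ^ (-α / 2) * t ^ (-(β + γ) / 2) =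
        t ^ (-(α + β) / 2 - 1) := by
      rw [← Real.rpow_add ht0, ← Real.rpow_add ht0]; ring_nf
    refine (kernel_le_max ha hb ht0.le).trans_eq ?_
    rw [max_eq_right has, max_eq_right (hba.trans has), Real.sqrt_rpow ht0.le,
      Real.sqrt_rpow ht0.le, hexp]
  have hC := comparisonConst_pos (α := α) (β := β) (γ := γ)
  calc ∫⁻ t in Ioi (a ^ 2), ENNReal.ofReal (kernel α β γ a b t)
      ≤ ENNReal.ofReal (∫ t in Ioi (a ^ 2), comparisonConst α β γ * t ^ (-(α + β) / 2 - 1)) := by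
        refine lintegral_ofReal_le_ofReal_integral
          (ae_restrict_of_forall_mem measurableSet_Ioi hbound)
          (ae_restrict_of_forall_mem measurableSet_Ioi fun t ht => ?_) (hpow.const_mul _)
        have : 0 < t := lt_trans (by positivity) ht
        positivity
    _ = ENNReal.ofReal (comparisonConst α β γ * (2 / (α + β)) * (a ^ (-α) * a ^ (-β))) := by
        rw [integral_const_mul, integral_Ioi_sq_rpow ha hαβ, ← Real.rpow_add ha, neg_add,
          mul_assoc]
    _ ≤ ENNReal.ofReal (comparisonConst α β γ * (2 / (α + β)) * (a ^ (-α) * b ^ (-β))) := by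
        gcongr ENNReal.ofReal (_ * (_ * ?_))
        exact Real.rpow_le_rpow_of_nonpos hb hba (neg_nonpos.mpr hβ)

end TwoScaleKernel

open TwoScaleKernel

/-- Let `α + β > 0`, `β > 0`, `γ > 0`. Then there is a constant
`N = N(α, β, γ) > 0` such that for all `a ≥ b > 0`,
`∫_0^∞ t^(γ/2 − 1) (a + √t)^(−α) (b + √t)^(−(β+γ)) dt ≤ N a^(−α) b^(−β)`,
the integral being the Lebesgue integral of the nonnegative integrand over `(0, ∞)`. -/
theorem stmt_0 (α β γ : ℝ) (hαβ : 0 < α + β) (hβ : 0 < β) (hγ : 0 < γ) :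
    ∃ N : ℝ, 0 < N ∧ ∀ a b : ℝ, 0 < b → b ≤ a →
      (∫⁻ t in Set.Ioi (0 : ℝ),
          ENNReal.ofReal
            (t ^ (γ / 2 - 1) * (a + Real.sqrt t) ^ (-α) * (b + Real.sqrt t) ^ (-(β + γ))))
        ≤ ENNReal.ofReal (N * a ^ (-α) * b ^ (-β)) := by
  have hC := comparisonConst_pos (α := α) (β := β) (γ := γ)
  refine ⟨comparisonConst α β γ * (2 / γ + 2 / β + 2 / (α + β)), by positivity, ?_⟩
  intro a b hb hba
  have hsplit : Ioi (0 : ℝ) = Ioc 0 (b ^ 2) ∪ (Ioc (b ^ 2) (a ^ 2) ∪ Ioi (a ^ 2)) := by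
    rw [Ioc_union_Ioi_eq_Ioi (pow_le_pow_left₀ hb.le hba 2),
      Ioc_union_Ioi_eq_Ioi (by positivity)]
  have hab : 0 ≤ a ^ (-α) * b ^ (-β) := by
    have : 0 < a := hb.trans_le hba
    positivity
  calc ∫⁻ t in Ioi 0, ENNReal.ofReal (kernel α β γ a b t)
      ≤ (∫⁻ t in Ioc 0 (b ^ 2), ENNReal.ofReal (kernel α β γ a b t)) +
          ((∫⁻ t in Ioc (b ^ 2) (a ^ 2), ENNReal.ofReal (kernel α β γ a b t)) +
            ∫⁻ t in Ioi (a ^ 2), ENNReal.ofReal (kernel α β γ a b t)) := by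
        rw [hsplit]
        exact (lintegral_union_le _ _ _).trans (add_le_add le_rfl (lintegral_union_le _ _ _))
    _ ≤ ENNReal.ofReal (comparisonConst α β γ * (2 / γ) * (a ^ (-α) * b ^ (-β))) +
          (ENNReal.ofReal (comparisonConst α β γ * (2 / β) * (a ^ (-α) * b ^ (-β))) +
            ENNReal.ofReal (comparisonConst α β γ * (2 / (α + β)) * (a ^ (-α) * b ^ (-β)))) :=
        add_le_add (setLIntegral_kernel_Ioc_zero_le hb hba hγ)
          (add_le_add (setLIntegral_kernel_Ioc_sq_le hb hba hβ)
            (setLIntegral_kernel_Ioi_sq_le hb hba hβ.le hαβ))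
    _ = ENNReal.ofReal (comparisonConst α β γ * (2 / γ + 2 / β + 2 / (α + β)) *
          a ^ (-α) * b ^ (-β)) := by
        rw [← ENNReal.ofReal_add (by positivity) (by positivity),
          ← ENNReal.ofReal_add (by positivity) (by positivity)]
        ring_nf
end

section
/- Let O be a nonempty open subset of ℝ^d with nonempty complement, and set ρ_O(x) := dist(x, ∂O) for x ∈ O. Then there exist a function ψ : O → ℝ that is infinitely differentiable on O, a constant N₀ ≥ 1 with N₀^{−1} ρ_O(x) ≤ ψ(x) ≤ N₀ ρ_O(x) for all x ∈ O, and for every m ∈ ℕ a constant N(m) such that ρ_O(x)^m ‖D^{m+1} ψ(x)‖ ≤ N(m) for all x ∈ O (in particular, all first derivatives of ψ are bounded on O). -/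
open MeasureTheory Metric Set Filter Function
open scoped Convolution Topology

noncomputable section

abbrev Eu (d : ℕ) := EuclideanSpace ℝ (Fin d)

variable {d : ℕ}

def st3bump (d : ℕ) : ContDiffBump (0 : Eu d) := ⟨1/2, 1, by norm_num, by norm_num⟩

def st3bn (d : ℕ) : Eu d → ℝ := (st3bump d).normed volume

lemma st3bn_contDiff : ContDiff ℝ (⊤ : ℕ∞) (st3bn d) := (st3bump d).contDiff_normed
lemma st3bn_compact : HasCompactSupport (st3bn d) := (st3bump d).hasCompactSupport_normed
lemma st3bn_nonneg (x : Eu d) : 0 ≤ st3bn d x := (st3bump d).nonneg_normed x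
lemma st3bn_support : support (st3bn d) = ball (0 : Eu d) 1 :=
  (st3bump d).support_normed_eq (μ := volume)
lemma st3bn_integral : ∫ x, st3bn d x = 1 := (st3bump d).integral_normed
lemma st3bn_integrable : Integrable (st3bn d) volume :=
  st3bn_contDiff.continuous.integrable_of_hasCompactSupport st3bn_compact

/-- Iterated derivative bound for convolution with a bounded function. -/
theorem st3_conv_bound (m : ℕ) :
    ∀ (F : Type) [NormedAddCommGroup F] [NormedSpace ℝ F] [CompleteSpace F]
      (f : Eu d → ℝ) (_ : LocallyIntegrable f volume) (_ : ∀ x, |f x| ≤ 1)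
      (g : Eu d → F) (_ : ContDiff ℝ (⊤ : ℕ∞) g) (_ : HasCompactSupport g) (x : Eu d),
      ‖iteratedFDeriv ℝ m (f ⋆[ContinuousLinearMap.lsmul ℝ ℝ, volume] g) x‖
        ≤ ∫ y, ‖iteratedFDeriv ℝ m g y‖ := by
  induction m with
  | zero =>
    intro F _ _ _ f hf hbd g hg hcg x
    rw [norm_iteratedFDeriv_zero]
    have hgi : Integrable (fun t => ‖g (x - t)‖) volume :=
      ((hg.continuous.integrable_of_hasCompactSupport hcg).comp_sub_left x).norm
    calc ‖(f ⋆[ContinuousLinearMap.lsmul ℝ ℝ, volume] g) x‖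
        ≤ ∫ t, ‖f t • g (x - t)‖ := by
          refine (norm_integral_le_integral_norm _).trans_eq ?_
          simp [convolution]
      _ ≤ ∫ t, ‖g (x - t)‖ := by
          refine integral_mono_of_nonneg (Eventually.of_forall fun t => norm_nonneg _) hgi
            (Eventually.of_forall fun t => ?_)
          show ‖f t • g (x - t)‖ ≤ ‖g (x - t)‖
          rw [norm_smul]
          calc ‖f t‖ * ‖g (x - t)‖ ≤ 1 * ‖g (x - t)‖ := by
                have := hbd t
                have : ‖f t‖ ≤ 1 := by rwa [Real.norm_eq_abs]
                exact mul_le_mul_of_nonneg_right this (norm_nonneg _)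
            _ = ‖g (x - t)‖ := one_mul _
      _ = ∫ t, ‖g t‖ := integral_sub_left_eq_self (fun t => ‖g t‖) volume x
      _ = ∫ y, ‖iteratedFDeriv ℝ 0 g y‖ := by simp [norm_iteratedFDeriv_zero]
  | succ m ih =>
    intro F _ _ _ f hf hbd g hg hcg x
    have hprec : (ContinuousLinearMap.lsmul ℝ ℝ : ℝ →L[ℝ] F →L[ℝ] F).precompR (Eu d)
        = (ContinuousLinearMap.lsmul ℝ ℝ : ℝ →L[ℝ] (Eu d →L[ℝ] F) →L[ℝ] (Eu d →L[ℝ] F)) := by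
      ext c u
      simp [ContinuousLinearMap.precompR]
    have hfd : fderiv ℝ (f ⋆[ContinuousLinearMap.lsmul ℝ ℝ, volume] g)
        = f ⋆[ContinuousLinearMap.lsmul ℝ ℝ, volume] (fderiv ℝ g) := by
      funext z
      have h1 := hcg.hasFDerivAt_convolution_right (ContinuousLinearMap.lsmul ℝ ℝ) hf
        (hg.of_le (by exact_mod_cast le_top)) z
      rw [h1.fderiv, hprec]
    rw [← norm_iteratedFDeriv_fderiv, hfd]
    calc ‖iteratedFDeriv ℝ m (f ⋆[ContinuousLinearMap.lsmul ℝ ℝ, volume] fderiv ℝ g) x‖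
        ≤ ∫ y, ‖iteratedFDeriv ℝ m (fderiv ℝ g) y‖ :=
          ih _ f hf hbd (fderiv ℝ g) (hg.fderiv_right (by exact_mod_cast le_top))
            (hcg.fderiv ℝ) x
      _ = ∫ y, ‖iteratedFDeriv ℝ (m + 1) g y‖ := by
          congr 1; funext y; rw [norm_iteratedFDeriv_fderiv]


/-- Mollified indicator of `A` at scale 1. -/
def st3W (d : ℕ) (A : Set (Eu d)) : Eu d → ℝ :=
  (A.indicator fun _ => (1:ℝ)) ⋆[ContinuousLinearMap.lsmul ℝ ℝ, volume] st3bn d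

variable {A : Set (Eu d)}

lemma st3_ind_locInt (hA : MeasurableSet A) :
    LocallyIntegrable (A.indicator fun _ => (1:ℝ)) volume :=
  (locallyIntegrable_const (1:ℝ)).indicator hA

lemma st3_ind_bd (A : Set (Eu d)) : ∀ x, |A.indicator (fun _ => (1:ℝ)) x| ≤ 1 := by
  intro x
  by_cases h : x ∈ A <;> simp [indicator_apply, h]

lemma st3W_contDiff (hA : MeasurableSet A) : ContDiff ℝ (⊤ : ℕ∞) (st3W d A) :=
  HasCompactSupport.contDiff_convolution_right _ st3bn_compact (st3_ind_locInt hA)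
    st3bn_contDiff

lemma st3W_apply (x : Eu d) :
    st3W d A x = ∫ t, A.indicator (fun _ => (1:ℝ)) t • st3bn d (x - t) := by
  simp [st3W, convolution]

lemma st3W_nonneg (x : Eu d) : 0 ≤ st3W d A x := by
  rw [st3W_apply]
  refine integral_nonneg fun t => ?_
  by_cases h : t ∈ A <;>
    simp [indicator_apply, h, st3bn_nonneg]

lemma st3W_le_one (x : Eu d) : st3W d A x ≤ 1 := by
  rw [st3W_apply]
  calc ∫ t, A.indicator (fun _ => (1:ℝ)) t • st3bn d (x - t)
      ≤ ∫ t, st3bn d (x - t) := by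
        refine integral_mono_of_nonneg (Eventually.of_forall fun t => ?_)
          (st3bn_integrable.comp_sub_left x) (Eventually.of_forall fun t => ?_)
        · by_cases h : t ∈ A <;> simp [indicator_apply, h, st3bn_nonneg]
        · show A.indicator (fun _ => (1:ℝ)) t • st3bn d (x - t) ≤ st3bn d (x - t)
          by_cases h : t ∈ A <;> simp [indicator_apply, h, st3bn_nonneg]
    _ = ∫ t, st3bn d t := integral_sub_left_eq_self (st3bn d) volume x
    _ = 1 := st3bn_integral

lemma st3W_eq_one (x : Eu d) (h : ball x 1 ⊆ A) : st3W d A x = 1 := by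
  rw [st3W_apply]
  have : ∀ t, A.indicator (fun _ => (1:ℝ)) t • st3bn d (x - t) = st3bn d (x - t) := by
    intro t
    by_cases hb : st3bn d (x - t) = 0
    · simp [hb]
    · have : x - t ∈ support (st3bn d) := hb
      rw [st3bn_support] at this
      have ht : t ∈ ball x 1 := by
        rw [mem_ball, dist_comm, dist_eq_norm]
        simpa using this
      simp [indicator_apply, h ht]
  rw [show (fun t => A.indicator (fun _ => (1:ℝ)) t • st3bn d (x - t))
      = fun t => st3bn d (x - t) from funext this]
  rw [integral_sub_left_eq_self (st3bn d) volume x]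
  exact st3bn_integral

lemma st3W_eq_zero (x : Eu d) (h : ∀ t ∈ ball x 1, t ∉ A) : st3W d A x = 0 := by
  rw [st3W_apply]
  have : ∀ t, A.indicator (fun _ => (1:ℝ)) t • st3bn d (x - t) = 0 := by
    intro t
    by_cases hb : st3bn d (x - t) = 0
    · simp [hb]
    · have : x - t ∈ support (st3bn d) := hb
      rw [st3bn_support] at this
      have ht : t ∈ ball x 1 := by
        rw [mem_ball, dist_comm, dist_eq_norm]
        simpa using this
      simp [indicator_apply, h t ht]
  simp only [this, integral_zero]

lemma st3W_deriv_bound (hA : MeasurableSet A) (m : ℕ) (x : Eu d) :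
    ‖iteratedFDeriv ℝ m (st3W d A) x‖ ≤ ∫ y, ‖iteratedFDeriv ℝ m (st3bn d) y‖ :=
  st3_conv_bound m ℝ _ (st3_ind_locInt hA) (st3_ind_bd A) _ st3bn_contDiff st3bn_compact x


variable (ρ : Eu d → ℝ)

/-- scaled superlevel set -/
def st3A (k : ℤ) : Set (Eu d) := {y | 4 * 2 ^ (-k) ≤ ρ ((2:ℝ) ^ (-k) • y)}

/-- the scaling map -/
def st3T (d : ℕ) (k : ℤ) : Eu d →L[ℝ] Eu d := (2:ℝ) ^ k • ContinuousLinearMap.id ℝ (Eu d)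

lemma st3T_apply (k : ℤ) (x : Eu d) : st3T d k x = (2:ℝ) ^ k • x := rfl

lemma st3T_norm_le (k : ℤ) : ‖st3T d k‖ ≤ (2:ℝ) ^ k := by
  refine ContinuousLinearMap.opNorm_le_bound _ (by positivity) fun x => ?_
  rw [st3T_apply, norm_smul]
  simp [abs_of_pos (zpow_pos (by norm_num : (0:ℝ) < 2) k)]

/-- the cutoff at scale `2^(-k)` -/
def st3w (k : ℤ) : Eu d → ℝ := st3W d (st3A ρ k) ∘ st3T d k

variable {ρ}

lemma st3A_meas (hρ : Continuous ρ) (k : ℤ) : MeasurableSet (st3A ρ k) := by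
  have : IsClosed (st3A ρ k) :=
    isClosed_le continuous_const (hρ.comp (continuous_const_smul _))
  exact this.measurableSet

lemma st3w_contDiff (hρ : Continuous ρ) (k : ℤ) : ContDiff ℝ (⊤ : ℕ∞) (st3w ρ k) :=
  (st3W_contDiff (st3A_meas hρ k)).comp (st3T d k).contDiff

lemma st3w_nonneg (k : ℤ) (x : Eu d) : 0 ≤ st3w ρ k x := st3W_nonneg (A := st3A ρ k) (st3T d k x)
lemma st3w_le_one (k : ℤ) (x : Eu d) : st3w ρ k x ≤ 1 := st3W_le_one (A := st3A ρ k) (st3T d k x)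

lemma two_zpow_pos (k : ℤ) : (0:ℝ) < 2 ^ k := zpow_pos (by norm_num) k

lemma st3_smul_cancel (k : ℤ) (x : Eu d) : (2:ℝ) ^ (-k) • (2:ℝ) ^ k • x = x := by
  rw [smul_smul, ← zpow_add₀ (by norm_num : (2:ℝ) ≠ 0)]
  simp

lemma st3_dist_smul (k : ℤ) (t : Eu d) (x : Eu d) :
    dist ((2:ℝ) ^ (-k) • t) x = (2:ℝ) ^ (-k) * dist t ((2:ℝ) ^ k • x) := by
  conv_lhs => rw [← st3_smul_cancel k x]
  rw [dist_smul₀]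
  simp [abs_of_pos (two_zpow_pos (-k))]

lemma st3w_eq_one (hρ : LipschitzWith 1 ρ) {k : ℤ} {x : Eu d}
    (h : 5 * 2 ^ (-k) ≤ ρ x) : st3w ρ k x = 1 := by
  show st3W d (st3A ρ k) (st3T d k x) = 1
  refine st3W_eq_one (A := st3A ρ k) _ fun t ht => ?_
  have hd : dist ((2:ℝ) ^ (-k) • t) x < 2 ^ (-k) := by
    rw [st3_dist_smul]
    calc (2:ℝ) ^ (-k) * dist t ((2:ℝ) ^ k • x) < 2 ^ (-k) * 1 :=
          mul_lt_mul_of_pos_left (mem_ball.1 ht) (two_zpow_pos _)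
      _ = 2 ^ (-k) := mul_one _
  have hlip : |ρ ((2:ℝ) ^ (-k) • t) - ρ x| ≤ dist ((2:ℝ) ^ (-k) • t) x := by
    rw [← Real.dist_eq]
    simpa using hρ.dist_le_mul ((2:ℝ) ^ (-k) • t) x
  have : ρ x - 2 ^ (-k) ≤ ρ ((2:ℝ) ^ (-k) • t) := by
    have h1 := (abs_le.1 hlip).1
    linarith [hd.le]
  show 4 * 2 ^ (-k) ≤ ρ ((2:ℝ) ^ (-k) • t)
  linarith

lemma st3w_eq_zero (hρ : LipschitzWith 1 ρ) {k : ℤ} {x : Eu d}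
    (h : ρ x < 3 * 2 ^ (-k)) : st3w ρ k x = 0 := by
  show st3W d (st3A ρ k) (st3T d k x) = 0
  refine st3W_eq_zero (A := st3A ρ k) _ fun t ht hA => ?_
  have hd : dist ((2:ℝ) ^ (-k) • t) x < 2 ^ (-k) := by
    rw [st3_dist_smul]
    calc (2:ℝ) ^ (-k) * dist t ((2:ℝ) ^ k • x) < 2 ^ (-k) * 1 :=
          mul_lt_mul_of_pos_left (mem_ball.1 ht) (two_zpow_pos _)
      _ = 2 ^ (-k) := mul_one _
  have hlip : |ρ ((2:ℝ) ^ (-k) • t) - ρ x| ≤ dist ((2:ℝ) ^ (-k) • t) x := by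
    rw [← Real.dist_eq]
    simpa using hρ.dist_le_mul ((2:ℝ) ^ (-k) • t) x
  have h2 : ρ ((2:ℝ) ^ (-k) • t) ≤ ρ x + 2 ^ (-k) := by
    have h1 := (abs_le.1 hlip).2
    linarith [hd.le]
  have h3 : (4:ℝ) * 2 ^ (-k) ≤ ρ ((2:ℝ) ^ (-k) • t) := hA
  linarith

lemma st3w_deriv_bound (hρ : Continuous ρ) (k : ℤ) (m : ℕ) (x : Eu d) :
    ‖iteratedFDeriv ℝ m (st3w ρ k) x‖
      ≤ ((2:ℝ) ^ k) ^ m * ∫ y, ‖iteratedFDeriv ℝ m (st3bn d) y‖ := by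
  have hcomp := (st3T d k).iteratedFDeriv_comp_right
    (f := st3W d (st3A ρ k)) (st3W_contDiff (st3A_meas hρ k)) x
    (i := m) (by exact_mod_cast le_top)
  rw [st3w, hcomp]
  calc ‖(iteratedFDeriv ℝ m (st3W d (st3A ρ k)) (st3T d k x)).compContinuousLinearMap
        fun _ => st3T d k‖
      ≤ ‖iteratedFDeriv ℝ m (st3W d (st3A ρ k)) (st3T d k x)‖ * ∏ _i : Fin m, ‖st3T d k‖ :=
        ContinuousMultilinearMap.norm_compContinuousLinearMap_le _ _
    _ ≤ ((2:ℝ) ^ k) ^ m * ∫ y, ‖iteratedFDeriv ℝ m (st3bn d) y‖ := by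
        rw [Finset.prod_const, Finset.card_univ, Fintype.card_fin]
        rw [mul_comm]
        refine mul_le_mul (pow_le_pow_left₀ (norm_nonneg _) (st3T_norm_le k) m)
          (st3W_deriv_bound (st3A_meas hρ k) m _) (norm_nonneg _) (by positivity)



lemma st3_iteratedFDeriv_congr {f g : Eu d → ℝ} {x : Eu d} (h : f =ᶠ[𝓝 x] g) (n : ℕ) :
    iteratedFDeriv ℝ n f x = iteratedFDeriv ℝ n g x := by
  rw [← iteratedFDerivWithin_univ, ← iteratedFDerivWithin_univ]
  exact (h.filter_mono nhdsWithin_le_nhds).iteratedFDerivWithin_eq h.self_of_nhds n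

lemma st3_iteratedFDeriv_const_zero {f : Eu d → ℝ} {c : ℝ} {x : Eu d} {n : ℕ} (hn : n ≠ 0)
    (h : f =ᶠ[𝓝 x] fun _ => c) : iteratedFDeriv ℝ n f x = 0 := by
  rw [st3_iteratedFDeriv_congr h n, iteratedFDeriv_const_of_ne hn]
  rfl

/-- derivative of `st3w` vanishes where `ρ` is large -/
lemma st3w_deriv_zero_hi (hρ : LipschitzWith 1 ρ) {k : ℤ} {x : Eu d} {n : ℕ} (hn : n ≠ 0)
    (h : 5 * 2 ^ (-k) < ρ x) : iteratedFDeriv ℝ n (st3w ρ k) x = 0 := by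
  refine st3_iteratedFDeriv_const_zero (c := 1) hn ?_
  have hopen : IsOpen {y : Eu d | 5 * 2 ^ (-k) < ρ y} :=
    isOpen_lt continuous_const hρ.continuous
  filter_upwards [hopen.mem_nhds h] with y hy
  exact st3w_eq_one hρ (le_of_lt hy)

/-- derivative of `st3w` vanishes where `ρ` is small -/
lemma st3w_deriv_zero_lo (hρ : LipschitzWith 1 ρ) {k : ℤ} {x : Eu d} {n : ℕ} (hn : n ≠ 0)
    (h : ρ x < 3 * 2 ^ (-k)) : iteratedFDeriv ℝ n (st3w ρ k) x = 0 := by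
  refine st3_iteratedFDeriv_const_zero (c := 0) hn ?_
  have hopen : IsOpen {y : Eu d | ρ y < 3 * 2 ^ (-k)} :=
    isOpen_lt hρ.continuous continuous_const
  filter_upwards [hopen.mem_nhds h] with y hy
  exact st3w_eq_zero hρ hy

-- geometric series over ℤ
lemma st3_geom_range (c : ℤ) : ∀ x ∉ Set.range (fun n : ℕ => c + (n:ℤ)),
    (if c ≤ x then (2:ℝ) ^ (-x) else 0) = 0 := by
  intro x hx
  rw [if_neg]
  intro hcx
  refine hx ⟨(x - c).toNat, ?_⟩
  show c + ((x - c).toNat : ℤ) = x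
  omega

lemma st3_geom_comp (c : ℤ) (n : ℕ) :
    (if c ≤ c + (n:ℤ) then (2:ℝ) ^ (-(c + (n:ℤ))) else 0) = (2:ℝ) ^ (-c) * (1/2) ^ n := by
  rw [if_pos (by omega)]
  rw [neg_add, zpow_add₀ (by norm_num : (2:ℝ) ≠ 0)]
  congr 1
  rw [zpow_neg, zpow_natCast, one_div, inv_pow]

lemma st3_geom_summable (c : ℤ) :
    Summable (fun k : ℤ => if c ≤ k then (2:ℝ) ^ (-k) else 0) := by
  rw [← (Function.Injective.summable_iff (g := fun n : ℕ => c + (n:ℤ))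
    (fun a b hab => Nat.cast_injective (add_left_cancel hab)) (st3_geom_range c))]
  have : ((fun k : ℤ => if c ≤ k then (2:ℝ) ^ (-k) else 0) ∘ fun n : ℕ => c + (n:ℤ))
      = fun n : ℕ => (2:ℝ) ^ (-c) * (1/2) ^ n := funext fun n => st3_geom_comp c n
  rw [this]
  exact (summable_geometric_of_lt_one (by norm_num) (by norm_num)).mul_left _

lemma st3_geom_tsum (c : ℤ) :
    ∑' k : ℤ, (if c ≤ k then (2:ℝ) ^ (-k) else 0) = 2 * 2 ^ (-c) := by
  rw [← Function.Injective.tsum_eq (g := fun n : ℕ => c + (n:ℤ))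
    (fun a b hab => Nat.cast_injective (add_left_cancel hab))
    (f := fun k : ℤ => if c ≤ k then (2:ℝ) ^ (-k) else 0)
    (fun x hx => by_contra fun hr => hx (st3_geom_range c x hr))]
  have : ∀ n : ℕ, (if c ≤ c + (n:ℤ) then (2:ℝ) ^ (-(c + (n:ℤ))) else 0)
      = (2:ℝ) ^ (-c) * (1/2) ^ n := st3_geom_comp c
  rw [tsum_congr this, tsum_mul_left, tsum_geometric_two]
  ring



/-- the regularized distance -/
def st3psi (ρ : Eu d → ℝ) : Eu d → ℝ := fun x => ∑' k : ℤ, (2:ℝ) ^ (-k) * st3w ρ k x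

lemma st3_term_nonneg (k : ℤ) (x : Eu d) : 0 ≤ (2:ℝ) ^ (-k) * st3w ρ k x :=
  mul_nonneg (two_zpow_pos _).le (st3w_nonneg k x)

lemma st3psi_summable (hρ : LipschitzWith 1 ρ) {x : Eu d} (hx : 0 < ρ x) :
    Summable (fun k : ℤ => (2:ℝ) ^ (-k) * st3w ρ k x) := by
  obtain ⟨n, hn1, hn2⟩ := exists_mem_Ico_zpow (div_pos hx (by norm_num : (0:ℝ) < 6))
    (one_lt_two : (1:ℝ) < 2)
  refine Summable.of_nonneg_of_le (fun k => st3_term_nonneg k x) (fun k => ?_)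
    (st3_geom_summable (-(n + 1)))
  by_cases hk : -(n + 1) ≤ k
  · rw [if_pos hk]
    calc (2:ℝ) ^ (-k) * st3w ρ k x ≤ 2 ^ (-k) * 1 :=
        mul_le_mul_of_nonneg_left (st3w_le_one k x) (two_zpow_pos _).le
      _ = 2 ^ (-k) := mul_one _
  · rw [if_neg hk]
    have hz : st3w ρ k x = 0 := by
      refine st3w_eq_zero hρ ?_
      have h1 : (2:ℝ) ^ (n + 2) ≤ 2 ^ (-k) := zpow_le_zpow_right₀ one_le_two (by omega)
      have h2 : ρ x < 6 * 2 ^ (n + 1) := by linarith [hn2]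
      have h3 : (2:ℝ) ^ (n + 2) = 2 ^ (n + 1) * 2 := by
        rw [show n + 2 = (n + 1) + 1 by ring, zpow_add_one₀ (by norm_num : (2:ℝ) ≠ 0)]
      linarith
    rw [hz, mul_zero]

lemma st3psi_lower (hρ : LipschitzWith 1 ρ) {x : Eu d} (hx : 0 < ρ x) :
    ρ x / 5 ≤ st3psi ρ x := by
  obtain ⟨n, hn1, hn2⟩ := exists_mem_Ico_zpow (div_pos hx (by norm_num : (0:ℝ) < 5))
    (one_lt_two : (1:ℝ) < 2)
  have key : ∀ k : ℤ, (if -n ≤ k then (2:ℝ) ^ (-k) else 0) ≤ (2:ℝ) ^ (-k) * st3w ρ k x := by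
    intro k
    by_cases hk : -n ≤ k
    · rw [if_pos hk]
      have h1 : (2:ℝ) ^ (-k) ≤ 2 ^ n := zpow_le_zpow_right₀ one_le_two (by omega)
      have hw : st3w ρ k x = 1 := by
        refine st3w_eq_one hρ ?_
        have : (5:ℝ) * 2 ^ (-k) ≤ 5 * 2 ^ n := by linarith
        calc (5:ℝ) * 2 ^ (-k) ≤ 5 * 2 ^ n := this
          _ ≤ 5 * (ρ x / 5) := by linarith
          _ = ρ x := by ring
      rw [hw, mul_one]
    · rw [if_neg hk]
      exact st3_term_nonneg k x
  have h := Summable.tsum_le_tsum key (st3_geom_summable (-n)) (st3psi_summable hρ hx)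
  rw [st3_geom_tsum (-n)] at h
  have h2 : ρ x / 5 ≤ 2 * 2 ^ (- -n) := by
    rw [neg_neg]
    have : (2:ℝ) ^ (n + 1) = 2 ^ n * 2 := zpow_add_one₀ (by norm_num) n
    linarith
  exact h2.trans h

lemma st3psi_upper (hρ : LipschitzWith 1 ρ) {x : Eu d} (hx : 0 < ρ x) :
    st3psi ρ x ≤ ρ x := by
  obtain ⟨n, hn1, hn2⟩ := exists_mem_Ico_zpow (div_pos hx (by norm_num : (0:ℝ) < 3))
    (one_lt_two : (1:ℝ) < 2)
  have key : ∀ k : ℤ, (2:ℝ) ^ (-k) * st3w ρ k x ≤ (if -n ≤ k then (2:ℝ) ^ (-k) else 0) := by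
    intro k
    by_cases hk : -n ≤ k
    · rw [if_pos hk]
      calc (2:ℝ) ^ (-k) * st3w ρ k x ≤ 2 ^ (-k) * 1 :=
          mul_le_mul_of_nonneg_left (st3w_le_one k x) (two_zpow_pos _).le
        _ = 2 ^ (-k) := mul_one _
    · rw [if_neg hk]
      have h1 : (2:ℝ) ^ (n + 1) ≤ 2 ^ (-k) := zpow_le_zpow_right₀ one_le_two (by omega)
      have hw : st3w ρ k x = 0 := by
        refine st3w_eq_zero hρ ?_
        calc ρ x < 3 * 2 ^ (n + 1) := by linarith
          _ ≤ 3 * 2 ^ (-k) := by linarith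
      rw [hw, mul_zero]
  have h := Summable.tsum_le_tsum key (st3psi_summable hρ hx) (st3_geom_summable (-n))
  rw [st3_geom_tsum (-n)] at h
  have h2 : 2 * (2:ℝ) ^ (- -n) ≤ ρ x := by
    rw [neg_neg]
    have h3 : (2:ℝ) ^ n ≤ ρ x / 3 := hn1
    linarith
  exact h.trans h2



lemma st3psi_localized (hρ : LipschitzWith 1 ρ) {x₀ : Eu d} (hx : 0 < ρ x₀) :
    ∃ (W : Finset ℤ) (c : ℝ),
      st3psi ρ =ᶠ[𝓝 x₀] fun y => (∑ k ∈ W, (2:ℝ) ^ (-k) * st3w ρ k y) + c := by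
  set r := ρ x₀ with hr
  obtain ⟨a, ha1, ha2⟩ := exists_mem_Ico_zpow (by linarith : (0:ℝ) < 2 * r / 3)
    (one_lt_two : (1:ℝ) < 2)
  obtain ⟨b, hb1, hb2⟩ := exists_mem_Ico_zpow (by linarith : (0:ℝ) < r / 10)
    (one_lt_two : (1:ℝ) < 2)
  have hba : b ≤ a := by
    by_contra hab
    push_neg at hab
    have h1 : (2:ℝ) ^ (a + 1) ≤ 2 ^ b := zpow_le_zpow_right₀ one_le_two (by omega)
    have h2 : (r:ℝ) / 10 < 2 * r / 3 := by linarith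
    linarith
  refine ⟨Finset.Icc (-a) (-b - 1), 2 * 2 ^ b, ?_⟩
  have hV : IsOpen {y : Eu d | r / 2 < ρ y ∧ ρ y < 2 * r} :=
    (isOpen_lt continuous_const hρ.continuous).inter (isOpen_lt hρ.continuous continuous_const)
  have hx₀V : x₀ ∈ {y : Eu d | r / 2 < ρ y ∧ ρ y < 2 * r} := ⟨by linarith, by linarith⟩
  filter_upwards [hV.mem_nhds hx₀V] with y hy
  obtain ⟨hy1, hy2⟩ := hy
  have hw0 : ∀ k : ℤ, k ≤ -a - 1 → st3w ρ k y = 0 := by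
    intro k hk
    refine st3w_eq_zero hρ ?_
    have h1 : (2:ℝ) ^ (a + 1) ≤ 2 ^ (-k) := zpow_le_zpow_right₀ one_le_two (by omega)
    calc ρ y < 2 * r := hy2
      _ < 3 * 2 ^ (a + 1) := by linarith
      _ ≤ 3 * 2 ^ (-k) := by linarith
  have hw1 : ∀ k : ℤ, -b ≤ k → st3w ρ k y = 1 := by
    intro k hk
    refine st3w_eq_one hρ ?_
    have h1 : (2:ℝ) ^ (-k) ≤ 2 ^ b := zpow_le_zpow_right₀ one_le_two (by omega)
    calc (5:ℝ) * 2 ^ (-k) ≤ 5 * 2 ^ b := by linarith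
      _ ≤ 5 * (r / 10) := by linarith
      _ = r / 2 := by ring
      _ ≤ ρ y := hy1.le
  have hsplit : ∀ k : ℤ, (2:ℝ) ^ (-k) * st3w ρ k y
      = (if k ∈ Finset.Icc (-a) (-b - 1) then (2:ℝ) ^ (-k) * st3w ρ k y else 0)
        + (if -b ≤ k then (2:ℝ) ^ (-k) else 0) := by
    intro k
    rcases show k ≤ -a - 1 ∨ (-a ≤ k ∧ k ≤ -b - 1) ∨ -b ≤ k by omega with h | h | h
    · rw [hw0 k h, if_neg (by rw [Finset.mem_Icc]; omega), if_neg (by omega)]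
      simp
    · rw [if_pos (by rw [Finset.mem_Icc]; omega), if_neg (by omega), add_zero]
    · rw [hw1 k h, if_neg (by rw [Finset.mem_Icc]; omega), if_pos h, mul_one, zero_add]
  have hsum1 : Summable (fun k : ℤ =>
      if k ∈ Finset.Icc (-a) (-b - 1) then (2:ℝ) ^ (-k) * st3w ρ k y else 0) :=
    summable_of_ne_finset_zero (s := Finset.Icc (-a) (-b - 1))
      (fun k hk => if_neg hk)
  show st3psi ρ y = _
  rw [st3psi, tsum_congr hsplit, Summable.tsum_add hsum1 (st3_geom_summable (-b))]
  congr 1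
  · rw [tsum_eq_sum (s := Finset.Icc (-a) (-b - 1)) (fun k hk => if_neg hk)]
    exact Finset.sum_congr rfl fun k hk => if_pos hk
  · rw [st3_geom_tsum (-b), neg_neg]



lemma st3psi_contDiffAt (hρ : LipschitzWith 1 ρ) {x₀ : Eu d} (hx : 0 < ρ x₀) :
    ContDiffAt ℝ (⊤ : ℕ∞) (st3psi ρ) x₀ := by
  obtain ⟨W, c, hW⟩ := st3psi_localized hρ hx
  have hF : ContDiff ℝ (⊤ : ℕ∞) fun y => (∑ k ∈ W, (2:ℝ) ^ (-k) * st3w ρ k y) + c :=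
    (ContDiff.sum fun k _ => contDiff_const.mul (st3w_contDiff hρ.continuous k)).add
      contDiff_const
  exact hF.contDiffAt.congr_of_eventuallyEq hW

lemma st3psi_deriv_bound (hρ : LipschitzWith 1 ρ) {x₀ : Eu d} (hx : 0 < ρ x₀) (m : ℕ) :
    ‖iteratedFDeriv ℝ (m + 1) (st3psi ρ) x₀‖
      ≤ (5 / ρ x₀) ^ m * ∫ y, ‖iteratedFDeriv ℝ (m + 1) (st3bn d) y‖ := by
  classical
  set C := ∫ y, ‖iteratedFDeriv ℝ (m + 1) (st3bn d) y‖ with hCdef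
  have hC : 0 ≤ C := integral_nonneg fun y => norm_nonneg _
  set r := ρ x₀ with hr
  have hB : 0 ≤ (5 / r) ^ m * C := by positivity
  obtain ⟨W, c, hW⟩ := st3psi_localized hρ hx
  rw [st3_iteratedFDeriv_congr hW (m + 1)]
  -- drop the constant
  have hsumCD : ContDiff ℝ (⊤ : ℕ∞) fun y => ∑ k ∈ W, (2:ℝ) ^ (-k) * st3w ρ k y :=
    ContDiff.sum fun k _ => contDiff_const.mul (st3w_contDiff hρ.continuous k)
  have h1 : iteratedFDeriv ℝ (m + 1)
      (fun y => (∑ k ∈ W, (2:ℝ) ^ (-k) * st3w ρ k y) + c) x₀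
      = iteratedFDeriv ℝ (m + 1) (fun y => ∑ k ∈ W, (2:ℝ) ^ (-k) * st3w ρ k y) x₀ := by
    have := iteratedFDeriv_add_apply (i := m + 1) (x := x₀)
      (f := fun y => ∑ k ∈ W, (2:ℝ) ^ (-k) * st3w ρ k y) (g := fun _ => c)
      (hsumCD.contDiffAt.of_le (by exact_mod_cast le_top)) contDiffAt_const
    rw [show (fun y => (∑ k ∈ W, (2:ℝ) ^ (-k) * st3w ρ k y) + c)
        = ((fun y => ∑ k ∈ W, (2:ℝ) ^ (-k) * st3w ρ k y) + fun _ => c) from rfl, this,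
      iteratedFDeriv_const_of_ne (Nat.succ_ne_zero m)]
    simp
  rw [h1]
  have h2 : iteratedFDeriv ℝ (m + 1) (fun y => ∑ k ∈ W, (2:ℝ) ^ (-k) * st3w ρ k y) x₀
      = ∑ k ∈ W, iteratedFDeriv ℝ (m + 1) (fun y => (2:ℝ) ^ (-k) * st3w ρ k y) x₀ := by
    have heq := iteratedFDeriv_sum (𝕜 := ℝ)
      (f := fun (k : ℤ) (y : Eu d) => (2:ℝ) ^ (-k) * st3w ρ k y) (u := W) (i := m + 1)
      (fun k _ =>
        (contDiff_const.mul (st3w_contDiff hρ.continuous k)).of_le (by exact_mod_cast le_top))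
    have h' := congrFun heq x₀
    simpa using h'
  rw [h2]
  -- individual terms
  have hterm : ∀ k : ℤ, iteratedFDeriv ℝ (m + 1) (fun y => (2:ℝ) ^ (-k) * st3w ρ k y) x₀
      = (2:ℝ) ^ (-k) • iteratedFDeriv ℝ (m + 1) (st3w ρ k) x₀ := by
    intro k
    rw [show (fun y => (2:ℝ) ^ (-k) * st3w ρ k y) = (2:ℝ) ^ (-k) • st3w ρ k from rfl]
    exact iteratedFDeriv_const_smul_apply ((st3w_contDiff hρ.continuous k).contDiffAt.of_le (by exact_mod_cast le_top))
  calc ‖∑ k ∈ W, iteratedFDeriv ℝ (m + 1) (fun y => (2:ℝ) ^ (-k) * st3w ρ k y) x₀‖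
      ≤ ∑ k ∈ W, ‖iteratedFDeriv ℝ (m + 1) (fun y => (2:ℝ) ^ (-k) * st3w ρ k y) x₀‖ :=
        norm_sum_le _ _
    _ = ∑ k ∈ W, (2:ℝ) ^ (-k) * ‖iteratedFDeriv ℝ (m + 1) (st3w ρ k) x₀‖ := by
        refine Finset.sum_congr rfl fun k _ => ?_
        rw [hterm k, norm_smul, Real.norm_eq_abs, abs_of_pos (two_zpow_pos _)]
    _ ≤ (5 / r) ^ m * C := ?_
  -- only the single active scale contributes
  set t := fun k : ℤ => (2:ℝ) ^ (-k) * ‖iteratedFDeriv ℝ (m + 1) (st3w ρ k) x₀‖ with ht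
  set p := fun k : ℤ => 3 * (2:ℝ) ^ (-k) ≤ r ∧ r ≤ 5 * (2:ℝ) ^ (-k) with hp
  have hnz : ∀ k ∈ W, t k ≠ 0 → p k := by
    intro k _ hk
    by_contra hpk
    rw [hp, not_and_or, not_le, not_le] at hpk
    rcases hpk with h | h
    · exact hk (by rw [ht]; simp [st3w_deriv_zero_lo hρ (Nat.succ_ne_zero m) h])
    · exact hk (by rw [ht]; simp [st3w_deriv_zero_hi hρ (Nat.succ_ne_zero m) h])
  rw [← Finset.sum_filter_of_ne hnz]
  have hcard : (W.filter p).card ≤ 1 := by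
    rw [Finset.card_le_one]
    intro i hi j hj
    have hpi : p i := (Finset.mem_filter.1 hi).2
    have hpj : p j := (Finset.mem_filter.1 hj).2
    by_contra hij
    have key : ∀ u v : ℤ, u < v → p u → p v → False := by
      intro u v huv hpu hpv
      have h1 : (2:ℝ) ^ (-v) ≤ 2 ^ (-u - 1) := zpow_le_zpow_right₀ one_le_two (by omega)
      have h2 : (2:ℝ) ^ (-u) = 2 ^ (-u - 1) * 2 := by
        rw [← zpow_add_one₀ (by norm_num : (2:ℝ) ≠ 0)]
        norm_num
      have h3 := hpu.1
      have h4 := hpv.2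
      have h5 := two_zpow_pos (-u - 1)
      linarith [h3, h4, h1, h2, h5]
    rcases lt_trichotomy i j with h | h | h
    · exact key i j h hpi hpj
    · exact hij h
    · exact key j i h hpj hpi
  have hbound : ∀ k ∈ W.filter p, t k ≤ (5 / r) ^ m * C := by
    intro k hk
    have hpk : p k := (Finset.mem_filter.1 hk).2
    have hd := st3w_deriv_bound hρ.continuous k (m + 1) x₀
    have hid : (2:ℝ) ^ (-k) * (((2:ℝ) ^ k) ^ (m + 1) * C) = ((2:ℝ) ^ k) ^ m * C := by
      rw [pow_succ, zpow_neg]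
      field_simp
    have h2k : (2:ℝ) ^ k ≤ 5 / r := by
      rw [le_div_iff₀ hx]
      have := hpk.2
      have h6 : (2:ℝ) ^ k * r ≤ (2:ℝ) ^ k * (5 * 2 ^ (-k)) :=
        mul_le_mul_of_nonneg_left this (two_zpow_pos k).le
      calc (2:ℝ) ^ k * r ≤ (2:ℝ) ^ k * (5 * 2 ^ (-k)) := h6
        _ = 5 * ((2:ℝ) ^ k * 2 ^ (-k)) := by ring
        _ = 5 := by
          rw [← zpow_add₀ (by norm_num : (2:ℝ) ≠ 0)]
          simp
    calc t k ≤ (2:ℝ) ^ (-k) * (((2:ℝ) ^ k) ^ (m + 1) * C) :=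
          mul_le_mul_of_nonneg_left hd (two_zpow_pos _).le
      _ = ((2:ℝ) ^ k) ^ m * C := hid
      _ ≤ (5 / r) ^ m * C :=
          mul_le_mul_of_nonneg_right
            (pow_le_pow_left₀ (two_zpow_pos k).le h2k m) hC
  calc ∑ k ∈ W.filter p, t k ≤ (W.filter p).card • ((5 / r) ^ m * C) :=
        Finset.sum_le_card_nsmul _ _ _ hbound
    _ ≤ (5 / r) ^ m * C := by
        rw [nsmul_eq_mul]
        calc ((W.filter p).card : ℝ) * ((5 / r) ^ m * C)
            ≤ 1 * ((5 / r) ^ m * C) := by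
              refine mul_le_mul_of_nonneg_right ?_ hB
              exact_mod_cast hcard
          _ = (5 / r) ^ m * C := one_mul _


/-- **regularized distance.** Let `O ⊆ ℝ^d` be a nonempty open set with
nonempty complement and `ρ_O(x) = dist(x, ∂O)`. Then there exist an infinitely
differentiable function `ψ` on `O`, a constant `N₀ ≥ 1` with
`N₀⁻¹ ρ_O ≤ ψ ≤ N₀ ρ_O` on `O`, and for every `m ∈ ℕ` a constant `N(m)` such that
`ρ_O(x)^m ‖D^(m+1) ψ(x)‖ ≤ N(m)` for all `x ∈ O`. -/
theorem stmt_3 (d : ℕ) (O : Set (EuclideanSpace ℝ (Fin d)))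
    (hO : IsOpen O) (hne : O.Nonempty) (hcne : Oᶜ.Nonempty) :
    ∃ ψ : EuclideanSpace ℝ (Fin d) → ℝ,
      ContDiffOn ℝ (⊤ : ℕ∞) ψ O ∧
      ∃ N₀ : ℝ, 1 ≤ N₀ ∧
        (∀ x ∈ O, N₀⁻¹ * Metric.infDist x (frontier O) ≤ ψ x ∧
            ψ x ≤ N₀ * Metric.infDist x (frontier O)) ∧
        ∀ m : ℕ, ∃ N : ℝ, ∀ x ∈ O,
          Metric.infDist x (frontier O) ^ m *
            ‖iteratedFDerivWithin ℝ (m + 1) ψ O x‖ ≤ N := by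
  have hfr : (frontier O).Nonempty := by
    by_contra h
    rw [not_nonempty_iff_eq_empty] at h
    have hclopen : IsClopen O := isClopen_iff_frontier_eq_empty.2 h
    rcases isClopen_iff.1 hclopen with rfl | rfl
    · exact absurd hne (by simp)
    · exact absurd hcne (by simp)
  set ρ : Eu d → ℝ := fun y => Metric.infDist y (frontier O) with hρdef
  have hρ : LipschitzWith 1 ρ := Metric.lipschitz_infDist_pt (frontier O)
  have hpos : ∀ x ∈ O, 0 < ρ x := by
    intro x hx
    refine (IsClosed.notMem_iff_infDist_pos isClosed_frontier hfr).1 ?_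
    rw [hO.frontier_eq]
    exact fun hmem => hmem.2 hx
  refine ⟨st3psi ρ, ?_, 5, by norm_num, ?_, ?_⟩
  · exact fun x hx => (st3psi_contDiffAt hρ (hpos x hx)).contDiffWithinAt
  · intro x hx
    have h1 := st3psi_lower hρ (hpos x hx)
    have h2 := st3psi_upper hρ (hpos x hx)
    constructor
    · calc (5:ℝ)⁻¹ * ρ x = ρ x / 5 := by ring
        _ ≤ st3psi ρ x := h1
    · calc st3psi ρ x ≤ ρ x := h2
        _ ≤ 5 * ρ x := by linarith [(hpos x hx)]
  · intro m
    refine ⟨5 ^ m * ∫ y, ‖iteratedFDeriv ℝ (m + 1) (st3bn d) y‖, fun x hx => ?_⟩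
    set C := ∫ y, ‖iteratedFDeriv ℝ (m + 1) (st3bn d) y‖ with hC
    have hCpos : 0 ≤ C := integral_nonneg fun y => norm_nonneg _
    have hrw : iteratedFDerivWithin ℝ (m + 1) (st3psi ρ) O x
        = iteratedFDeriv ℝ (m + 1) (st3psi ρ) x :=
      iteratedFDerivWithin_of_isOpen (m + 1) hO hx
    rw [hrw]
    have hb := st3psi_deriv_bound hρ (hpos x hx) m
    have hr : 0 < ρ x := hpos x hx
    calc ρ x ^ m * ‖iteratedFDeriv ℝ (m + 1) (st3psi ρ) x‖
        ≤ ρ x ^ m * ((5 / ρ x) ^ m * C) :=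
          mul_le_mul_of_nonneg_left hb (pow_nonneg hr.le m)
      _ = 5 ^ m * C := by
          rw [div_pow]
          field_simp
end
end

section
/- The function x ↦ tan(x)/x is strictly increasing on the interval (0, π/2) and strictly increasing on the interval (π/2, π); that is, if 0 < x < y < π/2 then tan(x)/x < tan(y)/y, and if π/2 < x < y < π then tan(x)/x < tan(y)/y. -/
/-! The derivative of `tan x / x` is `(x - sin x cos x) / (x cos x)²`, and
`sin x cos x = sin (2x) / 2 < x` for every `x > 0`. Hence `tan x / x` is strictly increasing on
every interval of positive reals on which `cos` does not vanish. -/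

open Real Set

lemma sin_mul_cos_lt_self {x : ℝ} (hx : 0 < x) : sin x * cos x < x := by
  have h := sin_lt (by positivity : 0 < 2 * x)
  rw [sin_two_mul] at h
  linarith

lemma hasDerivAt_tan_div_self {x : ℝ} (hx : x ≠ 0) (hcos : cos x ≠ 0) :
    HasDerivAt (fun t => tan t / t) ((x - sin x * cos x) / (x * cos x) ^ 2) x := by
  refine ((hasDerivAt_tan hcos).div (hasDerivAt_id x) hx).congr_deriv ?_
  rw [id, tan_eq_sin_div_cos]
  field_simp

lemma strictMonoOn_tan_div_self {D : Set ℝ} (hD : Convex ℝ D) (hpos : D ⊆ Ioi 0)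
    (hcos : ∀ x ∈ D, cos x ≠ 0) : StrictMonoOn (fun t => tan t / t) D := by
  have hderiv : ∀ x ∈ D, HasDerivAt (fun t => tan t / t)
      ((x - sin x * cos x) / (x * cos x) ^ 2) x := fun x hx =>
    hasDerivAt_tan_div_self (hpos hx).ne' (hcos x hx)
  refine strictMonoOn_of_deriv_pos hD
    (fun x hx => (hderiv x hx).continuousAt.continuousWithinAt) fun x hx => ?_
  have hxD := interior_subset hx
  have hx0 : 0 < x := hpos hxD
  rw [(hderiv x hxD).deriv]
  have hden : x * cos x ≠ 0 := mul_ne_zero hx0.ne' (hcos x hxD)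
  exact div_pos (sub_pos.2 (sin_mul_cos_lt_self hx0)) (by positivity)

/-- The function `x ↦ tan(x)/x` is strictly increasing on `(0, π/2)`
and strictly increasing on `(π/2, π)`. -/
theorem stmt_10 :
    (∀ x y : ℝ, 0 < x → x < y → y < Real.pi / 2 → Real.tan x / x < Real.tan y / y) ∧
    (∀ x y : ℝ, Real.pi / 2 < x → x < y → y < Real.pi → Real.tan x / x < Real.tan y / y) := by
  have hπ := pi_pos
  have hlow : StrictMonoOn (fun t => tan t / t) (Ioo 0 (π / 2)) :=
    strictMonoOn_tan_div_self (convex_Ioo _ _) (fun t ht => ht.1) fun t ht =>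
      (cos_pos_of_mem_Ioo ⟨by linarith [ht.1], ht.2⟩).ne'
  have hhigh : StrictMonoOn (fun t => tan t / t) (Ioo (π / 2) π) :=
    strictMonoOn_tan_div_self (convex_Ioo _ _) (fun t ht => show 0 < t by linarith [ht.1])
      fun t ht => (cos_neg_of_pi_div_two_lt_of_lt ht.1 (by linarith [ht.2])).ne
  exact ⟨fun x y hx hxy hy => hlow ⟨hx, hxy.trans hy⟩ ⟨hx.trans hxy, hy⟩ hxy,
    fun x y hx hxy hy => hhigh ⟨hx, hxy.trans hy⟩ ⟨hx.trans hxy, hy⟩ hxy⟩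
end

section
/- Let a, c > 0 and let κ, κ̃ ∈ (0, 2π) be such that either both κ, κ̃ ∈ (0, π) or both κ, κ̃ ∈ (π, 2π). If tan(κ̃/2) = √(a/c) · tan(κ/2), then κ̃ · √(min(a,c)) ≤ κ · √(max(a,c)); equivalently, π/κ̃ ≥ √( min(a,c) / max(a,c) ) · (π/κ). -/
/-!
The map `tan (κ / 2) ↦ √(a/c) · tan (κ / 2)` changes the half-angle by at most the factor
`M = √(max a c / min a c) ≥ 1`, because `arctan` is concave on `[0, ∞)` and vanishes at `0`:
`t · arctan x ≤ arctan (t x)` for `t ∈ [0, 1]`, `x ≥ 0`. For acute half-angles this gives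
`κ̃ ≤ M κ` directly. For obtuse ones it is applied to the supplements `π - κ / 2 < π / 2`,
giving a lower bound `π - κ̃ / 2 ≥ (π - κ / 2) / M`, and `M + M⁻¹ ≥ 2` turns this back into
`κ̃ ≤ M κ`.
-/

open Real

namespace Real

lemma mul_arctan_le_arctan_mul {t x : ℝ} (ht₀ : 0 ≤ t) (ht₁ : t ≤ 1) (hx : 0 ≤ x) :
    t * arctan x ≤ arctan (t * x) := by
  set f : ℝ → ℝ := fun y ↦ arctan (t * y) - t * arctan y
  have hf : ∀ y, HasDerivAt f (t * (1 / (1 + (t * y) ^ 2)) - t * (1 / (1 + y ^ 2))) y := fun y ↦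
    (((hasDerivAt_id' y).const_mul t).arctan.sub ((hasDerivAt_arctan y).const_mul t)).congr_deriv
      (by ring)
  have hmono : Monotone f := by
    refine monotone_of_deriv_nonneg (fun y ↦ (hf y).differentiableAt) fun y ↦ ?_
    rw [(hf y).deriv, ← mul_sub]
    refine mul_nonneg ht₀ (sub_nonneg.2 (one_div_le_one_div_of_le (by positivity) ?_))
    nlinarith [mul_le_mul_of_nonneg_right (mul_le_one₀ ht₁ ht₀ ht₁) (sq_nonneg y)]
  simpa [f] using hmono hx

lemma arctan_mul_le_mul_arctan {M x : ℝ} (hM : 1 ≤ M) (hx : 0 ≤ x) :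
    arctan (M * x) ≤ M * arctan x := by
  have hM₀ : 0 < M := one_pos.trans_le hM
  have h := mul_arctan_le_arctan_mul (inv_nonneg.2 hM₀.le) (inv_le_one_of_one_le₀ hM)
    (mul_nonneg hM₀.le hx)
  rw [inv_mul_cancel_left₀ hM₀.ne'] at h
  calc arctan (M * x) = M * (M⁻¹ * arctan (M * x)) := by field_simp
    _ ≤ M * arctan x := mul_le_mul_of_nonneg_left h hM₀.le

end Real

lemma le_mul_of_tan_eq_mul_tan_of_acute {s M φ φ' : ℝ} (hM : 1 ≤ M) (hsM : s ≤ M)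
    (hφ₀ : 0 ≤ φ) (hφ : φ < π / 2) (hφ'₀ : -(π / 2) < φ') (hφ' : φ' < π / 2)
    (htan : tan φ' = s * tan φ) : φ' ≤ M * φ := by
  have htφ : 0 ≤ tan φ := tan_nonneg_of_nonneg_of_le_pi_div_two hφ₀ hφ.le
  calc φ' = arctan (s * tan φ) := by rw [← htan, arctan_tan hφ'₀ hφ']
    _ ≤ arctan (M * tan φ) := arctan_strictMono.monotone (mul_le_mul_of_nonneg_right hsM htφ)
    _ ≤ M * arctan (tan φ) := arctan_mul_le_mul_arctan hM htφ
    _ = M * φ := by rw [arctan_tan (by linarith) hφ]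

lemma le_mul_of_tan_eq_mul_tan_of_obtuse {s M φ φ' : ℝ} (hM : 1 ≤ M) (hMs : M⁻¹ ≤ s)
    (hφ₀ : π / 2 < φ) (hφ : φ ≤ π) (hφ'₀ : π / 2 < φ') (hφ' : φ' < π)
    (htan : tan φ' = s * tan φ) : φ' ≤ M * φ := by
  have hM₀ : 0 < M := one_pos.trans_le hM
  set ψ := π - φ
  have htψ : 0 ≤ tan ψ := tan_nonneg_of_nonneg_of_le_pi_div_two (by linarith) (by linarith)
  have htan' : tan (π - φ') = s * tan ψ := by rw [tan_pi_sub, tan_pi_sub, htan, mul_neg]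
  have hψ' : M⁻¹ * ψ ≤ π - φ' :=
    calc M⁻¹ * ψ = M⁻¹ * arctan (tan ψ) := by rw [arctan_tan (by linarith) (by linarith)]
      _ ≤ arctan (M⁻¹ * tan ψ) :=
        mul_arctan_le_arctan_mul (inv_nonneg.2 hM₀.le) (inv_le_one_of_one_le₀ hM) htψ
      _ ≤ arctan (s * tan ψ) := arctan_strictMono.monotone (mul_le_mul_of_nonneg_right hMs htψ)
      _ = π - φ' := by rw [← htan', arctan_tan (by linarith) (by linarith)]
  have hψM : ψ ≤ M * (π - φ') := by
    simpa only [mul_inv_cancel_left₀ hM₀.ne'] using mul_le_mul_of_nonneg_left hψ' hM₀.le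
  have hsupp : 0 ≤ M * π - (M + 1) * ψ := by nlinarith
  refine le_of_mul_le_mul_left ?_ hM₀
  nlinarith [mul_nonneg (sub_nonneg.2 hM) hsupp]

lemma one_le_sqrt_max_div_min {a c : ℝ} (ha : 0 < a) (hc : 0 < c) :
    1 ≤ √(max a c / min a c) :=
  one_le_sqrt.2 ((one_le_div (lt_min ha hc)).2 min_le_max)

lemma sqrt_div_mem_Icc {a c : ℝ} (ha : 0 < a) (hc : 0 < c) :
    √(a / c) ∈ Set.Icc (√(max a c / min a c))⁻¹ √(max a c / min a c) := by
  rcases le_total a c with h | h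
  · rw [max_eq_right h, min_eq_left h, ← sqrt_inv, inv_div]
    exact ⟨le_rfl, sqrt_le_sqrt ((div_le_one hc).2 h |>.trans ((one_le_div ha).2 h))⟩
  · rw [max_eq_left h, min_eq_right h, ← sqrt_inv, inv_div]
    exact ⟨sqrt_le_sqrt ((div_le_one ha).2 h |>.trans ((one_le_div hc).2 h)), le_rfl⟩

/-- Let `a, c > 0` and `κ, κ̃ ∈ (0, 2π)` with either both in `(0, π)` or
both in `(π, 2π)`. If `tan(κ̃/2) = √(a/c) · tan(κ/2)`, then
`κ̃ √(min(a,c)) ≤ κ √(max(a,c))`. -/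
theorem stmt_11 (a c κ κ' : ℝ) (ha : 0 < a) (hc : 0 < c)
    (hcase : (0 < κ ∧ κ < Real.pi ∧ 0 < κ' ∧ κ' < Real.pi) ∨
      (Real.pi < κ ∧ κ < 2 * Real.pi ∧ Real.pi < κ' ∧ κ' < 2 * Real.pi))
    (htan : Real.tan (κ' / 2) = Real.sqrt (a / c) * Real.tan (κ / 2)) :
    κ' * Real.sqrt (min a c) ≤ κ * Real.sqrt (max a c) := by
  set M := √(max a c / min a c)
  have hM := one_le_sqrt_max_div_min ha hc
  obtain ⟨hMs, hsM⟩ := sqrt_div_mem_Icc ha hc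
  have hhalf : κ' / 2 ≤ M * (κ / 2) := by
    rcases hcase with ⟨h₁, h₂, h₃, h₄⟩ | ⟨h₁, h₂, h₃, h₄⟩
    · exact le_mul_of_tan_eq_mul_tan_of_acute hM hsM (by linarith) (by linarith) (by linarith)
        (by linarith) htan
    · exact le_mul_of_tan_eq_mul_tan_of_obtuse hM hMs (by linarith) (by linarith)
        (by linarith) (by linarith) htan
  have hMmin : M * √(min a c) = √(max a c) := by
    rw [← sqrt_mul (div_nonneg (ha.le.trans (le_max_left a c)) (lt_min ha hc).le),
      div_mul_cancel₀ _ (lt_min ha hc).ne']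
  calc κ' * √(min a c) ≤ κ * M * √(min a c) :=
        mul_le_mul_of_nonneg_right (by linarith) (sqrt_nonneg _)
    _ = κ * √(max a c) := by rw [mul_assoc, hMmin]
end
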